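/- Let μ be a finite positive Borel measure on ℝ, let n₁ = (n_{1,1},…,n_{1,p₁}) and n₂ = (n_{2,1},…,n_{2,p₂}) be compositions, and let w_{1,1},…,w_{1,p₁}, w_{2,1},…,w_{2,p₂} be measurable real functions such that x ↦ x^m w_{1,a}(x) w_{2,b}(x) is μ-integrable for all m ∈ ℤ_{≥0}, a, b. Let g be the moment matrix g_{i,j} = ∫ ξ₁^{(i)}(x) ξ₂^{(j)}(x) dμ(x), where ξ_α^{(i)}(x) = w_{α,a_α(i)}(x)·x^{k_α(i)·n_{α,a_α(i)} + r_α(i)} is the weighted monomial string of composition n_α. Then g satisfies the Hankel-type symmetry Υ₁ g = g Υ₂ᵀ; explicitly, for all i, j ∈ ℤ_{≥0}: g_{σ₁(i), j} = g_{i, σ₂(j)}, where σ_α(i) = min{m ≥ i+1 : a_α(m) = a_α(i)}. -/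

import Mathlib

/-!
Position `l` of the weighted monomial string carries the monomial of degree `k(l) n_{a(l)} + r(l)`.
Among the positions of a fixed type `a`, both `l = k |n| + (n_1 + ⋯ + n_{a-1}) + r` and the degree
`k n_a + r` are increasing in `(k, r)` for the lexicographic order, and every degree is attained.
Hence the next position of the same type, `σ(l)`, carries exactly one degree more, so
`ξ^{(σ(l))}(x) = x ξ^{(l)}(x)` pointwise, and the two entries of the symmetry are integrals of
the same function `x ξ₁^{(i)}(x) ξ₂^{(j)}(x)`.
-/

open MeasureTheory

lemma mul_add_lt_mul_add_iff_lex {c k k' r r' : ℕ} (hr : r < c) (hr' : r' < c) :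
    k * c + r < k' * c + r' ↔ k < k' ∨ k = k' ∧ r < r' := by
  constructor
  · intro h
    obtain hk | rfl | hk := lt_trichotomy k k'
    · exact Or.inl hk
    · exact Or.inr ⟨rfl, by omega⟩
    · have : (k' + 1) * c ≤ k * c := Nat.mul_le_mul_right c hk
      nlinarith
  · rintro (hk | ⟨rfl, hrr⟩)
    · have : (k + 1) * c ≤ k' * c := Nat.mul_le_mul_right c hk
      nlinarith
    · omega

section BlockDecomposition

variable {p : ℕ} (n : Fin p → ℕ)

def blockStart (a : Fin p) : ℕ :=
  ∑ i ∈ Finset.univ.filter (fun i => i < a), n i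

lemma blockStart_add_le_sum (a : Fin p) : blockStart n a + n a ≤ ∑ b, n b := by
  rw [blockStart, add_comm, ← Finset.sum_insert (by simp)]
  exact Finset.sum_le_sum_of_subset (Finset.subset_univ _)

lemma blockStart_add_le_of_lt {a a' : Fin p} (h : a < a') :
    blockStart n a + n a ≤ blockStart n a' := by
  rw [blockStart, add_comm, ← Finset.sum_insert (by simp)]
  refine Finset.sum_le_sum_of_subset fun x hx => ?_
  simp only [Finset.mem_insert, Finset.mem_filter, Finset.mem_univ, true_and] at hx ⊢
  rcases hx with rfl | hx
  exacts [h, hx.trans h]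

lemma eq_of_blockStart_add_eq {a a' : Fin p} {r r' : ℕ} (hr : r < n a) (hr' : r' < n a')
    (h : blockStart n a + r = blockStart n a' + r') : a = a' ∧ r = r' := by
  obtain hlt | rfl | hgt := lt_trichotomy a a'
  · have := blockStart_add_le_of_lt n hlt
    omega
  · exact ⟨rfl, by omega⟩
  · have := blockStart_add_le_of_lt n hgt
    omega

def IsBlockDecomposition (kk : ℕ → ℕ) (aa : ℕ → Fin p) (rr : ℕ → ℕ) : Prop :=
  ∀ l, rr l < n (aa l) ∧ l = kk l * (∑ b, n b) + blockStart n (aa l) + rr l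

def monomialDegree (kk : ℕ → ℕ) (aa : ℕ → Fin p) (rr : ℕ → ℕ) (l : ℕ) : ℕ :=
  kk l * n (aa l) + rr l

def IsNextOfSameType {α : Type*} (aa : ℕ → α) (σ : ℕ → ℕ) : Prop :=
  ∀ l, l + 1 ≤ σ l ∧ aa (σ l) = aa l ∧ ∀ m, l + 1 ≤ m → aa m = aa l → σ l ≤ m

variable {n} {kk : ℕ → ℕ} {aa : ℕ → Fin p} {rr : ℕ → ℕ}

namespace IsBlockDecomposition

lemma unique (h : IsBlockDecomposition n kk aa rr) {l k r : ℕ} {a : Fin p} (hr : r < n a)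
    (hl : l = k * (∑ b, n b) + blockStart n a + r) : kk l = k ∧ aa l = a ∧ rr l = r := by
  obtain ⟨hrl, hl'⟩ := h l
  have hN := blockStart_add_le_sum n a
  have hN' := blockStart_add_le_sum n (aa l)
  have hpos : 0 < ∑ b, n b := by omega
  obtain ⟨hk, hmod⟩ : l / (∑ b, n b) = k ∧ l % (∑ b, n b) = blockStart n a + r :=
    (Nat.div_mod_unique hpos).2 ⟨by linarith, by omega⟩
  obtain ⟨hk', hmod'⟩ : l / (∑ b, n b) = kk l ∧ l % (∑ b, n b) = blockStart n (aa l) + rr l :=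
    (Nat.div_mod_unique hpos).2 ⟨by linarith, by omega⟩
  obtain ⟨ha, hr⟩ := eq_of_blockStart_add_eq n hrl hr (hmod'.symm.trans hmod)
  exact ⟨hk'.symm.trans hk, ha, hr⟩

lemma lt_iff_monomialDegree_lt (h : IsBlockDecomposition n kk aa rr) {l l' : ℕ}
    (ha : aa l = aa l') :
    l < l' ↔ monomialDegree n kk aa rr l < monomialDegree n kk aa rr l' := by
  obtain ⟨hr, hl⟩ := h l
  obtain ⟨hr', hl'⟩ := h l'
  rw [ha] at hr hl
  have hN := blockStart_add_le_sum n (aa l')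
  rw [monomialDegree, monomialDegree, ha, mul_add_lt_mul_add_iff_lex hr hr',
    ← mul_add_lt_mul_add_iff_lex (c := ∑ b, n b) (by omega) (by omega)]
  omega

lemma exists_monomialDegree_eq (h : IsBlockDecomposition n kk aa rr) {a : Fin p} (ha : 0 < n a)
    (e : ℕ) : ∃ l, aa l = a ∧ monomialDegree n kk aa rr l = e := by
  obtain ⟨hk, ha', hr⟩ := h.unique (Nat.mod_lt e ha)
    (l := e / n a * (∑ b, n b) + blockStart n a + e % n a) rfl
  exact ⟨_, ha', by rw [monomialDegree, hk, ha', hr, Nat.div_add_mod']⟩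

lemma monomialDegree_next (h : IsBlockDecomposition n kk aa rr) {σ : ℕ → ℕ}
    (hσ : IsNextOfSameType aa σ) (l : ℕ) :
    monomialDegree n kk aa rr (σ l) = monomialDegree n kk aa rr l + 1 := by
  obtain ⟨hlσ, haσ, hmin⟩ := hσ l
  obtain ⟨m, ham, hm⟩ := h.exists_monomialDegree_eq (a := aa l)
    (Nat.zero_lt_of_lt (h l).1) (monomialDegree n kk aa rr l + 1)
  have hlm : l < m := (h.lt_iff_monomialDegree_lt ham.symm).2 (by omega)
  set d := monomialDegree n kk aa rr
  have hup : d l < d (σ l) := (h.lt_iff_monomialDegree_lt haσ.symm).1 hlσ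
  have hdown : ¬ d m < d (σ l) := fun hlt =>
    absurd ((h.lt_iff_monomialDegree_lt (ham.trans haσ.symm)).2 hlt) (not_lt.2 (hmin m hlm ham))
  omega

lemma shift_eq_mul {R : Type*} [CommMonoid R] (h : IsBlockDecomposition n kk aa rr)
    {σ : ℕ → ℕ} (hσ : IsNextOfSameType aa σ) {w : Fin p → R → R} {ξ : ℕ → R → R}
    (hξ : ∀ i x, ξ i x = w (aa i) x * x ^ monomialDegree n kk aa rr i) (l : ℕ) (x : R) :
    ξ (σ l) x = x * ξ l x := by
  rw [hξ, hξ, (hσ l).2.1, h.monomialDegree_next hσ, pow_succ]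
  ac_rfl

end IsBlockDecomposition

end BlockDecomposition

theorem stmt_8_general (μ : Measure ℝ)
    (p₁ p₂ : ℕ)
    (n₁ : Fin p₁ → ℕ)
    (n₂ : Fin p₂ → ℕ)
    (w₁ : Fin p₁ → ℝ → ℝ) (w₂ : Fin p₂ → ℝ → ℝ)
    (kk₁ : ℕ → ℕ) (aa₁ : ℕ → Fin p₁) (rr₁ : ℕ → ℕ)
    (hdec₁ : ∀ l, rr₁ l < n₁ (aa₁ l) ∧
      l = kk₁ l * (∑ b, n₁ b) +
          (∑ i ∈ Finset.univ.filter (fun i => i < aa₁ l), n₁ i) + rr₁ l)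
    (kk₂ : ℕ → ℕ) (aa₂ : ℕ → Fin p₂) (rr₂ : ℕ → ℕ)
    (hdec₂ : ∀ l, rr₂ l < n₂ (aa₂ l) ∧
      l = kk₂ l * (∑ b, n₂ b) +
          (∑ i ∈ Finset.univ.filter (fun i => i < aa₂ l), n₂ i) + rr₂ l)
    (σ₁ : ℕ → ℕ)
    (hσ₁ : ∀ l, l + 1 ≤ σ₁ l ∧ aa₁ (σ₁ l) = aa₁ l ∧
      ∀ m, l + 1 ≤ m → aa₁ m = aa₁ l → σ₁ l ≤ m)
    (σ₂ : ℕ → ℕ)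
    (hσ₂ : ∀ l, l + 1 ≤ σ₂ l ∧ aa₂ (σ₂ l) = aa₂ l ∧
      ∀ m, l + 1 ≤ m → aa₂ m = aa₂ l → σ₂ l ≤ m)
    (ξ₁ : ℕ → ℝ → ℝ)
    (hξ₁ : ∀ i x, ξ₁ i x = w₁ (aa₁ i) x * x ^ (kk₁ i * n₁ (aa₁ i) + rr₁ i))
    (ξ₂ : ℕ → ℝ → ℝ)
    (hξ₂ : ∀ j x, ξ₂ j x = w₂ (aa₂ j) x * x ^ (kk₂ j * n₂ (aa₂ j) + rr₂ j))
    (g : ℕ → ℕ → ℝ)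
    (hg : ∀ i j, g i j = ∫ x, ξ₁ i x * ξ₂ j x ∂μ) :
    ∀ i j, g (σ₁ i) j = g i (σ₂ j) := by
  have hshift₁ := IsBlockDecomposition.shift_eq_mul (n := n₁) hdec₁ hσ₁ hξ₁
  have hshift₂ := IsBlockDecomposition.shift_eq_mul (n := n₂) hdec₂ hσ₂ hξ₂
  intro i j
  rw [hg, hg]
  congr 1 with x
  rw [hshift₁, hshift₂]
  ring

/-- The moment matrix `g_{i,j} = ∫ ξ₁⁽ⁱ⁾ ξ₂⁽ʲ⁾ dμ` of multiple orthogonality of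
mixed type satisfies the Hankel-type symmetry `Υ₁ g = g Υ₂ᵀ`, i.e.
`g_{σ₁(i),j} = g_{i,σ₂(j)}`. -/
theorem stmt_8 (μ : Measure ℝ) [IsFiniteMeasure μ]
    (p₁ p₂ : ℕ) (hp₁ : 1 ≤ p₁) (hp₂ : 1 ≤ p₂)
    (n₁ : Fin p₁ → ℕ) (hn₁ : ∀ a, 1 ≤ n₁ a)
    (n₂ : Fin p₂ → ℕ) (hn₂ : ∀ b, 1 ≤ n₂ b)
    (w₁ : Fin p₁ → ℝ → ℝ) (w₂ : Fin p₂ → ℝ → ℝ)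
    (hw₁ : ∀ a, Measurable (w₁ a)) (hw₂ : ∀ b, Measurable (w₂ b))
    (hint : ∀ (m : ℕ) (a : Fin p₁) (b : Fin p₂),
      Integrable (fun x => x ^ m * w₁ a x * w₂ b x) μ)
    (kk₁ : ℕ → ℕ) (aa₁ : ℕ → Fin p₁) (rr₁ : ℕ → ℕ)
    (hdec₁ : ∀ l, rr₁ l < n₁ (aa₁ l) ∧
      l = kk₁ l * (∑ b, n₁ b) +
          (∑ i ∈ Finset.univ.filter (fun i => i < aa₁ l), n₁ i) + rr₁ l)
    (kk₂ : ℕ → ℕ) (aa₂ : ℕ → Fin p₂) (rr₂ : ℕ → ℕ)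
    (hdec₂ : ∀ l, rr₂ l < n₂ (aa₂ l) ∧
      l = kk₂ l * (∑ b, n₂ b) +
          (∑ i ∈ Finset.univ.filter (fun i => i < aa₂ l), n₂ i) + rr₂ l)
    (σ₁ : ℕ → ℕ)
    (hσ₁ : ∀ l, l + 1 ≤ σ₁ l ∧ aa₁ (σ₁ l) = aa₁ l ∧
      ∀ m, l + 1 ≤ m → aa₁ m = aa₁ l → σ₁ l ≤ m)
    (σ₂ : ℕ → ℕ)
    (hσ₂ : ∀ l, l + 1 ≤ σ₂ l ∧ aa₂ (σ₂ l) = aa₂ l ∧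
      ∀ m, l + 1 ≤ m → aa₂ m = aa₂ l → σ₂ l ≤ m)
    (ξ₁ : ℕ → ℝ → ℝ)
    (hξ₁ : ∀ i x, ξ₁ i x = w₁ (aa₁ i) x * x ^ (kk₁ i * n₁ (aa₁ i) + rr₁ i))
    (ξ₂ : ℕ → ℝ → ℝ)
    (hξ₂ : ∀ j x, ξ₂ j x = w₂ (aa₂ j) x * x ^ (kk₂ j * n₂ (aa₂ j) + rr₂ j))
    (g : ℕ → ℕ → ℝ)
    (hg : ∀ i j, g i j = ∫ x, ξ₁ i x * ξ₂ j x ∂μ) :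
    ∀ i j, g (σ₁ i) j = g i (σ₂ j) :=
  stmt_8_general μ p₁ p₂ n₁ n₂ w₁ w₂ kk₁ aa₁ rr₁ hdec₁ kk₂ aa₂ rr₂ hdec₂ σ₁ hσ₁ σ₂ hσ₂ ξ₁ hξ₁ ξ₂ hξ₂
    g hg
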